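/- n-step belief clipping lemma: in a POMDP with reward function R and observable goal set G, let b be a belief over S with an observation, let μ be a belief clip for b with Δ := Σμ, and let b̃ := b ⊖ μ be the induced belief. Then for every n ∈ ℕ, (1 − Δ)·V_n(b̃) + ∑_{s∈S} μ(s)·U_n(s) ≤ V_n(b). -/
import Mathlib


open Finset

attribute [local instance] Classical.propDecidable

noncomputable section

/-- A belief over a finite type `S`: a nonnegative function summing to one. -/
def IsBelief {S : Type} [Fintype S] (b : S → ℝ) : Prop :=
  (∀ s, 0 ≤ b s) ∧ (∑ s, b s = 1)

/-- A belief clip for a belief `b`: `0 ≤ μ(s) ≤ b(s)` pointwise and `Σμ < 1`. -/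
def IsBeliefClip {S : Type} [Fintype S] (b μ : S → ℝ) : Prop :=
  (∀ s, 0 ≤ μ s ∧ μ s ≤ b s) ∧ (∑ s, μ s < 1)

/-- The induced function `b ⊖ μ`, defined by `(b ⊖ μ)(s) = (b(s) − μ(s)) / (1 − Σμ)`. -/
def clipped {S : Type} [Fintype S] (b μ : S → ℝ) : S → ℝ :=
  fun s => (b s - μ s) / (1 - ∑ s', μ s')

variable {S Act Z : Type}

/-- The set of actions enabled in state `s`: those whose outgoing probabilities sum to 1. -/
def enabledA [Fintype S] [Fintype Act] (P : S → Act → S → ℝ) (s : S) : Finset Act :=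
  univ.filter fun α => ∑ s' : S, P s α s' = 1

/-- The actions enabled at an observation `z`: `Act(z) = Act(s)` for some `s` with `O s = z`. -/
def obsEnabled [Fintype S] [Fintype Act] (O : S → Z) (P : S → Act → S → ℝ) (z : Z) :
    Finset Act :=
  if h : ∃ s, O s = z then enabledA P h.choose else ∅

/-- The POMDP assumptions on the observation function `O` and the transition function `P`:
nonnegative transition probabilities, each state-action row sums to 0 or 1, every state has
some enabled action, and equally-observed states have equal enabled actions. -/
def IsPOMDP [Fintype S] [Fintype Act] (O : S → Z) (P : S → Act → S → ℝ) : Prop :=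
  (∀ s α s', 0 ≤ P s α s') ∧
  (∀ s α, (∑ s', P s α s') = 0 ∨ (∑ s', P s α s') = 1) ∧
  (∀ s, (enabledA P s).Nonempty) ∧
  (∀ s s', O s = O s' → enabledA P s = enabledA P s')

/-- `b` has observation `z`: the support of `b` is contained in `O⁻¹(z)`. -/
def HasObs (O : S → Z) (b : S → ℝ) (z : Z) : Prop :=
  ∀ s, 0 < b s → O s = z

/-- `P(s,α,z)`: probability to observe `z` after taking `α` in state `s`. -/
def Pso [Fintype S] (O : S → Z) (P : S → Act → S → ℝ) (s : S) (α : Act) (z : Z) : ℝ :=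
  ∑ s' : S, if O s' = z then P s α s' else 0

/-- `P(b,α,z)`: probability to observe `z` after taking `α` in belief `b`. -/
def Pbo [Fintype S] (O : S → Z) (P : S → Act → S → ℝ) (b : S → ℝ) (α : Act) (z : Z) : ℝ :=
  ∑ s : S, b s * Pso O P s α z

/-- The successor belief `⟦b|α,z⟧`. -/
def succB [Fintype S] (O : S → Z) (P : S → Act → S → ℝ) (b : S → ℝ) (α : Act) (z : Z) :
    S → ℝ :=
  fun s => if O s = z then (∑ s' : S, b s' * P s' α s) / Pbo O P b α z else 0

/-- The belief reward `R(b,α,z)`. -/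
def Rbel [Fintype S] (O : S → Z) (P R : S → Act → S → ℝ) (b : S → ℝ) (α : Act) (z : Z) : ℝ :=
  (∑ s : S, b s * ∑ s' : S, if O s' = z then R s α s' * P s α s' else 0) / Pbo O P b α z

/-- The last observation of a finite observation trace `z₀ α₁ z₁ … αₙ zₙ`,
represented as the pair of `z₀` and the list `[(α₁,z₁),…,(αₙ,zₙ)]`. -/
def lastObs (τ : Z × List (Act × Z)) : Z :=
  (τ.2.getLast?.map Prod.snd).getD τ.1

/-- An observation-based policy: to each finite observation trace it assigns a probability
distribution over actions supported on the actions enabled at the last observation. -/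
def IsObsPolicy [Fintype S] [Fintype Act] (O : S → Z) (P : S → Act → S → ℝ)
    (σ : Z × List (Act × Z) → Act → ℝ) : Prop :=
  ∀ τ, (∀ α, 0 ≤ σ τ α) ∧ (∑ α, σ τ α = 1) ∧
    (∀ α, σ τ α ≠ 0 → ∀ s, O s = lastObs τ → α ∈ enabledA P s)

/-- The shifted policy `σ⇝(z,α)`, behaving as `σ` after observing `z` and taking `α`. -/
def shiftPol (σ : Z × List (Act × Z) → Act → ℝ) (z : Z) (α : Act) :
    Z × List (Act × Z) → Act → ℝ :=
  fun τ => σ (z, (α, τ.1) :: τ.2)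

/-- Goal states are observable: membership in `G` is determined by the observation. -/
def ObservableGoal (O : S → Z) (G : Set S) : Prop :=
  ∃ Z' : Set Z, ∀ s, s ∈ G ↔ O s ∈ Z'

/-- The `n`-step state values `W_n^σ` under an observation-based policy `σ`. -/
def Wval [Fintype S] [Fintype Act] (O : S → Z) (P R : S → Act → S → ℝ) (G : Set S) :
    ℕ → (Z × List (Act × Z) → Act → ℝ) → S → ℝ
  | 0, _, _ => 0
  | n+1, σ, s =>
    if s ∈ G then 0
    else ∑ α ∈ enabledA P s, σ (O s, []) α *
      ∑ s' : S, P s α s' * (R s α s' + Wval O P R G n (shiftPol σ (O s) α) s')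

/-- The `n`-step belief values `V_n^σ(b)` under policy `σ`, for a belief `b` with
observation `z`. -/
def Vpol [Fintype S] [Fintype Act] [Fintype Z] (O : S → Z) (P R : S → Act → S → ℝ)
    (G : Set S) :
    ℕ → (Z × List (Act × Z) → Act → ℝ) → (S → ℝ) → Z → ℝ
  | 0, _, _, _ => 0
  | n+1, σ, b, z =>
    if ∀ s, 0 < b s → s ∈ G then 0
    else ∑ α ∈ obsEnabled O P z, σ (z, []) α *
      ∑ z' ∈ univ.filter (fun z' => 0 < Pbo O P b α z'),
        Pbo O P b α z' *
          (Rbel O P R b α z' + Vpol O P R G n (shiftPol σ z α) (succB O P b α z') z')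

/-- Maximum of `f` over a finite set (0 for the empty set). -/
def maxOver {α : Type} (t : Finset α) (f : α → ℝ) : ℝ :=
  if h : t.Nonempty then t.sup' h f else 0

/-- Minimum of `f` over a finite set (0 for the empty set). -/
def minOver {α : Type} (t : Finset α) (f : α → ℝ) : ℝ :=
  if h : t.Nonempty then t.inf' h f else 0

/-- The `n`-step optimal belief values `V_n(b)`, for a belief `b` with observation `z`. -/
def Vopt [Fintype S] [Fintype Act] [Fintype Z] (O : S → Z) (P R : S → Act → S → ℝ)
    (G : Set S) :
    ℕ → (S → ℝ) → Z → ℝ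
  | 0, _, _ => 0
  | n+1, b, z =>
    if ∀ s, 0 < b s → s ∈ G then 0
    else maxOver (obsEnabled O P z) fun α =>
      ∑ z' ∈ univ.filter (fun z' => 0 < Pbo O P b α z'),
        Pbo O P b α z' * (Rbel O P R b α z' + Vopt O P R G n (succB O P b α z') z')

/-- The `n`-step minimal values `U_n` on the underlying fully observable MDP. -/
def Umin [Fintype S] [Fintype Act] (P R : S → Act → S → ℝ) (G : Set S) : ℕ → S → ℝ
  | 0, _ => 0
  | n+1, s =>
    if s ∈ G then 0
    else minOver (enabledA P s) fun α =>
      ∑ s' : S, P s α s' * (R s α s' + Umin P R G n s')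

end


section helpers

attribute [local instance] Classical.propDecidable
set_option linter.unusedSectionVars false

variable {S Act Z : Type} [Fintype S] [Fintype Act] [Fintype Z]

lemma Vopt_succ (O : S → Z) (P R : S → Act → S → ℝ) (G : Set S) (n : ℕ) (b : S → ℝ) (z : Z) :
    Vopt O P R G (n+1) b z =
      if ∀ s, 0 < b s → s ∈ G then 0
      else maxOver (obsEnabled O P z) fun α =>
        ∑ z' ∈ univ.filter (fun z' => 0 < Pbo O P b α z'),
          Pbo O P b α z' * (Rbel O P R b α z' + Vopt O P R G n (succB O P b α z') z') := by
  rfl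

lemma Umin_succ (P R : S → Act → S → ℝ) (G : Set S) (n : ℕ) (s : S) :
    Umin P R G (n+1) s =
      if s ∈ G then 0
      else minOver (enabledA P s) fun α =>
        ∑ s' : S, P s α s' * (R s α s' + Umin P R G n s') := rfl

lemma le_maxOver {α : Type} {t : Finset α} {f : α → ℝ} {a : α} (ha : a ∈ t) :
    f a ≤ maxOver t f := by
  rw [maxOver, dif_pos ⟨a, ha⟩]; exact Finset.le_sup' f ha

lemma maxOver_attained {α : Type} {t : Finset α} (h : t.Nonempty) (f : α → ℝ) :
    ∃ a ∈ t, maxOver t f = f a := by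
  obtain ⟨a, ha, hEq⟩ := Finset.exists_mem_eq_sup' h f
  exact ⟨a, ha, by rw [maxOver, dif_pos h, hEq]⟩

lemma minOver_le {α : Type} {t : Finset α} {f : α → ℝ} {a : α} (ha : a ∈ t) :
    minOver t f ≤ f a := by
  rw [minOver, dif_pos ⟨a, ha⟩]; exact Finset.inf'_le f ha

lemma Pso_nonneg {O : S → Z} {P : S → Act → S → ℝ} (hP : ∀ s α s', 0 ≤ P s α s')
    (s : S) (α : Act) (z : Z) : 0 ≤ Pso O P s α z :=
  Finset.sum_nonneg fun s' _ => by by_cases h : O s' = z <;> simp [Pso, h, hP]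

lemma Pbo_nonneg {O : S → Z} {P : S → Act → S → ℝ} (hP : ∀ s α s', 0 ≤ P s α s')
    {b : S → ℝ} (hb : ∀ s, 0 ≤ b s) (α : Act) (z : Z) : 0 ≤ Pbo O P b α z :=
  Finset.sum_nonneg fun s _ => mul_nonneg (hb s) (Pso_nonneg hP s α z)

lemma P_eq_zero {O : S → Z} {P : S → Act → S → ℝ} (hP : ∀ s α s', 0 ≤ P s α s')
    {b : S → ℝ} (hb : ∀ s, 0 ≤ b s) {α : Act} {z : Z}
    (h : Pbo O P b α z = 0) {s s' : S} (hs : 0 < b s) (hs' : O s' = z) :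
    P s α s' = 0 := by
  have h1 : b s * Pso O P s α z = 0 :=
    (Finset.sum_eq_zero_iff_of_nonneg
      (fun s _ => mul_nonneg (hb s) (Pso_nonneg hP s α z))).mp h s (Finset.mem_univ s)
  have h2 : Pso O P s α z = 0 := by
    rcases mul_eq_zero.mp h1 with h' | h'
    · exact absurd h' hs.ne'
    · exact h'
  have h3 := (Finset.sum_eq_zero_iff_of_nonneg
      (fun s'' _ => by by_cases hh : O s'' = z <;> simp [hh, hP])).mp h2 s' (Finset.mem_univ s')
  simpa [hs'] using h3

lemma obsEnabled_eq {O : S → Z} {P : S → Act → S → ℝ} (hM : IsPOMDP O P)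
    {s : S} {z : Z} (hs : O s = z) : obsEnabled O P z = enabledA P s := by
  have hex : ∃ s', O s' = z := ⟨s, hs⟩
  rw [obsEnabled, dif_pos hex]
  exact hM.2.2.2 _ _ (hex.choose_spec.trans hs.symm)

/-- The key sum identity: summing the successor-belief numerator over states with
observation `z'` gives `Pbo`. -/
lemma key_sum {O : S → Z} (P : S → Act → S → ℝ) (b : S → ℝ) (α : Act) (z' : Z) :
    ∑ s, (if O s = z' then ∑ s', b s' * P s' α s else 0) = Pbo O P b α z' := by
  rw [Pbo]
  calc ∑ s, (if O s = z' then ∑ s', b s' * P s' α s else 0)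
      = ∑ s, ∑ s', (if O s = z' then b s' * P s' α s else 0) :=
        Finset.sum_congr rfl fun s _ => by by_cases h : O s = z' <;> simp [h]
    _ = ∑ s', ∑ s, (if O s = z' then b s' * P s' α s else 0) := Finset.sum_comm
    _ = ∑ s', b s' * Pso O P s' α z' := by
        refine Finset.sum_congr rfl fun s' _ => ?_
        rw [Pso, Finset.mul_sum]
        refine Finset.sum_congr rfl fun s _ => ?_
        by_cases h : O s = z' <;> simp [h]

end helpers
section helpers2

attribute [local instance] Classical.propDecidable
set_option linter.unusedSectionVars false

open Finset

variable {S Act Z : Type} [Fintype S] [Fintype Act] [Fintype Z]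

/-- The central sum-exchange identity: the μ-weighted parts of rewards and continuation
values, summed over reachable observations, equal the expected one-step MDP value. -/
lemma step_eq {O : S → Z} {P : S → Act → S → ℝ} (hP : ∀ s α s', 0 ≤ P s α s')
    (R : S → Act → S → ℝ) (G : Set S) (n : ℕ)
    {b w : S → ℝ} (hb : ∀ s, 0 ≤ b s) (hw : ∀ s, 0 ≤ w s ∧ w s ≤ b s) (α : Act) :
    ∑ z' ∈ univ.filter (fun z' => 0 < Pbo O P b α z'),
      ((∑ s, w s * ∑ s', (if O s' = z' then R s α s' * P s α s' else 0))
        + ∑ s, (if O s = z' then ∑ s', w s' * P s' α s else 0) * Umin P R G n s)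
    = ∑ s, w s * ∑ s', P s α s' * (R s α s' + Umin P R G n s') := by
  set T : Z → ℝ := fun z' =>
    (∑ s, w s * ∑ s', (if O s' = z' then R s α s' * P s α s' else 0))
      + ∑ s, (if O s = z' then ∑ s', w s' * P s' α s else 0) * Umin P R G n s with hT
  have hwpos : ∀ s, 0 < w s → 0 < b s := fun s h => lt_of_lt_of_le h (hw s).2
  have hvan : ∀ z', ¬ (0 < Pbo O P b α z') → T z' = 0 := by
    intro z' hz'
    have hc : Pbo O P b α z' = 0 := le_antisymm (not_lt.mp hz') (Pbo_nonneg hP hb α z')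
    have hA : (∑ s, w s * ∑ s', (if O s' = z' then R s α s' * P s α s' else 0)) = 0 := by
      refine Finset.sum_eq_zero fun s _ => ?_
      rcases eq_or_lt_of_le (hw s).1 with h | h
      · rw [← h, zero_mul]
      · have : (∑ s', (if O s' = z' then R s α s' * P s α s' else 0)) = 0 := by
          refine Finset.sum_eq_zero fun s' _ => ?_
          by_cases ho : O s' = z'
          · rw [if_pos ho, P_eq_zero hP hb hc (hwpos s h) ho, mul_zero]
          · rw [if_neg ho]
        rw [this, mul_zero]
    have hB : (∑ s, (if O s = z' then ∑ s', w s' * P s' α s else 0) * Umin P R G n s) = 0 := by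
      refine Finset.sum_eq_zero fun s _ => ?_
      by_cases ho : O s = z'
      · have : (∑ s', w s' * P s' α s) = 0 := by
          refine Finset.sum_eq_zero fun s' _ => ?_
          rcases eq_or_lt_of_le (hw s').1 with h | h
          · rw [← h, zero_mul]
          · rw [P_eq_zero hP hb hc (hwpos s' h) ho, mul_zero]
        rw [if_pos ho, this, zero_mul]
      · rw [if_neg ho, zero_mul]
    show _ + _ = (0:ℝ)
    rw [hA, hB, add_zero]
  have h1 : ∑ z' ∈ univ.filter (fun z' => 0 < Pbo O P b α z'), T z' = ∑ z', T z' := by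
    rw [Finset.sum_filter]
    refine Finset.sum_congr rfl fun z' _ => ?_
    by_cases h : 0 < Pbo O P b α z'
    · rw [if_pos h]
    · rw [if_neg h, hvan z' h]
  rw [h1]
  show (∑ z', ((∑ s, w s * ∑ s', (if O s' = z' then R s α s' * P s α s' else 0))
      + ∑ s, (if O s = z' then ∑ s', w s' * P s' α s else 0) * Umin P R G n s)) = _
  rw [Finset.sum_add_distrib]
  have hA : ∑ z', ∑ s, w s * ∑ s', (if O s' = z' then R s α s' * P s α s' else 0)
      = ∑ s, w s * ∑ s', R s α s' * P s α s' := by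
    rw [Finset.sum_comm]
    refine Finset.sum_congr rfl fun s _ => ?_
    rw [← Finset.mul_sum, Finset.sum_comm]
    congr 1
    refine Finset.sum_congr rfl fun s' _ => ?_
    rw [Finset.sum_ite_eq univ (O s') (fun _ => R s α s' * P s α s'), if_pos (mem_univ _)]
  have hB : ∑ z', ∑ s, (if O s = z' then ∑ s', w s' * P s' α s else 0) * Umin P R G n s
      = ∑ s, w s * ∑ s', P s α s' * Umin P R G n s' := by
    rw [Finset.sum_comm]
    have h2 : ∀ s : S, ∑ z', (if O s = z' then ∑ s', w s' * P s' α s else 0) * Umin P R G n s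
        = (∑ s', w s' * P s' α s) * Umin P R G n s := by
      intro s
      have : ∀ z', (if O s = z' then ∑ s', w s' * P s' α s else 0) * Umin P R G n s
          = (if O s = z' then (∑ s', w s' * P s' α s) * Umin P R G n s else 0) := fun z' => by
        by_cases h : O s = z' <;> simp [h]
      rw [Finset.sum_congr rfl fun z' _ => this z',
        Finset.sum_ite_eq univ (O s) (fun _ => (∑ s', w s' * P s' α s) * Umin P R G n s),
        if_pos (mem_univ _)]
    rw [Finset.sum_congr rfl fun s _ => h2 s]
    have h3 : ∑ s, (∑ s', w s' * P s' α s) * Umin P R G n s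
        = ∑ s, ∑ s', w s' * P s' α s * Umin P R G n s := by
      simp [Finset.sum_mul, mul_assoc]
    rw [h3, Finset.sum_comm]
    refine Finset.sum_congr rfl fun s _ => ?_
    rw [Finset.mul_sum]
    exact Finset.sum_congr rfl fun s' _ => by ring
  rw [hA, hB, ← Finset.sum_add_distrib]
  refine Finset.sum_congr rfl fun s _ => ?_
  rw [← mul_add, ← Finset.sum_add_distrib]
  congr 1
  exact Finset.sum_congr rfl fun s' _ => by ring

/-- The successor belief is a belief with observation `z'`. -/
lemma succB_isBelief {O : S → Z} {P : S → Act → S → ℝ} (hP : ∀ s α s', 0 ≤ P s α s')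
    {b : S → ℝ} (hb : ∀ s, 0 ≤ b s) {α : Act} {z' : Z} (hc : 0 < Pbo O P b α z') :
    IsBelief (succB O P b α z') ∧ HasObs O (succB O P b α z') z' := by
  have hnum : ∀ s, 0 ≤ ∑ s', b s' * P s' α s := fun s =>
    Finset.sum_nonneg fun s' _ => mul_nonneg (hb s') (hP s' α s)
  refine ⟨⟨fun s => ?_, ?_⟩, fun s hs => ?_⟩
  · rw [succB]
    by_cases h : O s = z'
    · rw [if_pos h]; exact div_nonneg (hnum s) hc.le
    · rw [if_neg h]
  · have : ∑ s, succB O P b α z' s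
        = (∑ s, (if O s = z' then ∑ s', b s' * P s' α s else 0)) / Pbo O P b α z' := by
      rw [Finset.sum_div]
      refine Finset.sum_congr rfl fun s _ => ?_
      rw [succB]
      by_cases h : O s = z' <;> simp [h]
    rw [this, key_sum, div_self hc.ne']
  · by_contra h
    rw [succB, if_neg h] at hs
    exact lt_irrefl 0 hs

lemma Rbel_mul {O : S → Z} (P R : S → Act → S → ℝ) {b : S → ℝ} {α : Act} {z' : Z}
    (hc : Pbo O P b α z' ≠ 0) :
    Pbo O P b α z' * Rbel O P R b α z'
      = ∑ s, b s * ∑ s', (if O s' = z' then R s α s' * P s α s' else 0) := by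
  rw [Rbel, mul_comm, div_mul_cancel₀ _ hc]

end helpers2
section helpers3

attribute [local instance] Classical.propDecidable
set_option linter.unusedSectionVars false

open Finset

variable {S Act Z : Type} [Fintype S] [Fintype Act] [Fintype Z]

/-- Auxiliary lemma L: the optimal belief value dominates the expected minimal MDP value. -/
lemma aux_L (O : S → Z) (P : S → Act → S → ℝ) (hM : IsPOMDP O P)
    (R : S → Act → S → ℝ) (G : Set S) (hG : ObservableGoal O G) :
    ∀ (n : ℕ) (b : S → ℝ) (z : Z), IsBelief b → HasObs O b z →
      ∑ s, b s * Umin P R G n s ≤ Vopt O P R G n b z := by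
  intro n
  induction n with
  | zero => intro b z _ _; simp [Vopt, Umin]
  | succ n ih =>
    intro b z hb hobs
    rw [Vopt_succ]
    by_cases hg : ∀ s, 0 < b s → s ∈ G
    · rw [if_pos hg]
      have hz : ∑ s, b s * Umin P R G (n+1) s = 0 := by
        refine Finset.sum_eq_zero fun s _ => ?_
        rcases eq_or_lt_of_le (hb.1 s) with h | h
        · rw [← h, zero_mul]
        · rw [Umin_succ, if_pos (hg s h), mul_zero]
      rw [hz]
    · rw [if_neg hg]
      push_neg at hg
      obtain ⟨s₀, hs₀b, hs₀G⟩ := hg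
      have hz₀ : O s₀ = z := hobs s₀ hs₀b
      obtain ⟨Z', hZ'⟩ := hG
      have hnotG : ∀ s, O s = z → s ∉ G := by
        intro s hs hsG
        exact hs₀G ((hZ' s₀).mpr (by rw [hz₀, ← hs]; exact (hZ' s).mp hsG))
      obtain ⟨α, hα⟩ := hM.2.2.1 s₀
      have hαz : α ∈ obsEnabled O P z := by rw [obsEnabled_eq hM hz₀]; exact hα
      have hαs : ∀ s, O s = z → α ∈ enabledA P s := fun s hs => by
        rw [← hM.2.2.2 s₀ s (hz₀.trans hs.symm)]; exact hα
      refine le_trans ?_ (le_maxOver hαz)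
      have step := step_eq (O := O) hM.1 R G n hb.1 (fun s => ⟨hb.1 s, le_refl _⟩) α
      have h1 : ∑ s, b s * Umin P R G (n+1) s
          ≤ ∑ s, b s * ∑ s', P s α s' * (R s α s' + Umin P R G n s') := by
        refine Finset.sum_le_sum fun s _ => ?_
        rcases eq_or_lt_of_le (hb.1 s) with h | h
        · rw [← h, zero_mul, zero_mul]
        · refine mul_le_mul_of_nonneg_left ?_ (hb.1 s)
          rw [Umin_succ, if_neg (hnotG s (hobs s h))]
          exact minOver_le (hαs s (hobs s h))
      refine h1.trans ?_
      rw [← step]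
      refine Finset.sum_le_sum fun z' hz' => ?_
      rw [Finset.mem_filter] at hz'
      have hc : 0 < Pbo O P b α z' := hz'.2
      obtain ⟨hsb, hso⟩ := succB_isBelief hM.1 hb.1 hc
      have hV := ih (succB O P b α z') z' hsb hso
      have hR : Pbo O P b α z' * Rbel O P R b α z'
          = ∑ s, b s * ∑ s', (if O s' = z' then R s α s' * P s α s' else 0) :=
        Rbel_mul P R hc.ne'
      have hU : Pbo O P b α z' * (∑ s, succB O P b α z' s * Umin P R G n s)
          = ∑ s, (if O s = z' then ∑ s', b s' * P s' α s else 0) * Umin P R G n s := by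
        rw [Finset.mul_sum]
        refine Finset.sum_congr rfl fun s _ => ?_
        rw [succB]
        by_cases h : O s = z'
        · rw [if_pos h, if_pos h, ← mul_assoc, mul_comm (Pbo O P b α z'),
            div_mul_cancel₀ _ hc.ne']
        · simp [h]
      calc (∑ s, b s * ∑ s', (if O s' = z' then R s α s' * P s α s' else 0))
            + ∑ s, (if O s = z' then ∑ s', b s' * P s' α s else 0) * Umin P R G n s
          = Pbo O P b α z' * (Rbel O P R b α z'
              + ∑ s, succB O P b α z' s * Umin P R G n s) := by rw [mul_add, hR, hU]
        _ ≤ Pbo O P b α z' * (Rbel O P R b α z' + Vopt O P R G n (succB O P b α z') z') := by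
            refine mul_le_mul_of_nonneg_left (by linarith) hc.le

end helpers3
section main

attribute [local instance] Classical.propDecidable
set_option linter.unusedSectionVars false
set_option maxHeartbeats 1000000

open Finset

variable {S Act Z : Type} [Fintype S] [Fintype Act] [Fintype Z]

lemma main_aux (O : S → Z) (P : S → Act → S → ℝ) (hM : IsPOMDP O P)
    (R : S → Act → S → ℝ) (G : Set S) (hG : ObservableGoal O G) :
    ∀ (n : ℕ) (b μ : S → ℝ) (z : Z), IsBelief b → HasObs O b z → IsBeliefClip b μ →
    (1 - ∑ s, μ s) * Vopt O P R G n (clipped b μ) z + ∑ s, μ s * Umin P R G n s ≤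
      Vopt O P R G n b z := by
  intro n
  induction n with
  | zero => intro b μ z _ _ _; simp [Vopt, Umin]
  | succ n ih =>
    intro b μ z hb hobs hμ
    have hΔpos : 0 < 1 - ∑ s, μ s := by linarith [hμ.2]
    set bt := clipped b μ with hbt
    have hpt : ∀ s, b s = (1 - ∑ s', μ s') * bt s + μ s := fun s => by
      rw [hbt]; unfold clipped
      rw [mul_div_cancel₀ _ hΔpos.ne']; ring
    have hbtnn : ∀ s, 0 ≤ bt s := fun s => by
      rw [hbt]; unfold clipped
      exact div_nonneg (by linarith [(hμ.1 s).2]) hΔpos.le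
    have hbtsum : ∑ s, bt s = 1 := by
      have h := Finset.sum_congr rfl (fun s (_ : s ∈ univ) => hpt s)
      rw [Finset.sum_add_distrib, ← Finset.mul_sum, hb.2] at h
      nlinarith [h]
    have hbtbel : IsBelief bt := ⟨hbtnn, hbtsum⟩
    have hbtsupp : ∀ s, 0 < bt s → 0 < b s := fun s h => by
      have := hpt s; have := (hμ.1 s).1; nlinarith
    have hbtobs : HasObs O bt z := fun s h => hobs s (hbtsupp s h)
    have hsum_decomp : ∀ f : S → ℝ,
        ∑ s, b s * f s = (1 - ∑ s', μ s') * (∑ s, bt s * f s) + ∑ s, μ s * f s := by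
      intro f
      rw [Finset.mul_sum, ← Finset.sum_add_distrib]
      refine Finset.sum_congr rfl fun s _ => ?_
      rw [hpt s]; ring
    by_cases hg : ∀ s, 0 < b s → s ∈ G
    · rw [Vopt_succ O P R G n bt z, if_pos (fun s h => hg s (hbtsupp s h)),
        Vopt_succ O P R G n b z, if_pos hg]
      have hz : ∑ s, μ s * Umin P R G (n+1) s = 0 := by
        refine Finset.sum_eq_zero fun s _ => ?_
        rcases eq_or_lt_of_le (hμ.1 s).1 with h | h
        · rw [← h, zero_mul]
        · rw [Umin_succ, if_pos (hg s (lt_of_lt_of_le h (hμ.1 s).2)), mul_zero]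
      rw [hz, mul_zero, add_zero]
    · push_neg at hg
      obtain ⟨s₀, hs₀b, hs₀G⟩ := hg
      have hz₀ : O s₀ = z := hobs s₀ hs₀b
      obtain ⟨Z', hZ'⟩ := hG
      have hnotG : ∀ s, O s = z → s ∉ G := by
        intro s hs hsG
        exact hs₀G ((hZ' s₀).mpr (by rw [hz₀, ← hs]; exact (hZ' s).mp hsG))
      have hbtex : ∃ s, 0 < bt s := by
        by_contra h
        push_neg at h
        have : ∑ s, bt s ≤ 0 := Finset.sum_nonpos fun s _ => h s
        linarith [hbtsum]
      obtain ⟨s₁, hs₁⟩ := hbtex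
      have hbtng : ¬ ∀ s, 0 < bt s → s ∈ G := fun hall =>
        hnotG s₁ (hbtobs s₁ hs₁) (hall s₁ hs₁)
      have hbng : ¬ ∀ s, 0 < b s → s ∈ G := fun hall => hs₀G (hall s₀ hs₀b)
      rw [Vopt_succ O P R G n bt z, if_neg hbtng, Vopt_succ O P R G n b z, if_neg hbng]
      have hne : (obsEnabled O P z).Nonempty := by
        rw [obsEnabled_eq hM hz₀]; exact hM.2.2.1 s₀
      obtain ⟨α, hαz, hmax⟩ := maxOver_attained hne (fun α =>
        ∑ z' ∈ univ.filter (fun z' => 0 < Pbo O P bt α z'),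
          Pbo O P bt α z' * (Rbel O P R bt α z' + Vopt O P R G n (succB O P bt α z') z'))
      rw [hmax]
      refine le_trans ?_ (le_maxOver hαz)
      have hαs : ∀ s, O s = z → α ∈ enabledA P s := fun s hs => by
        rw [← obsEnabled_eq hM hs]; exact hαz
      -- step 1: μ-weighted Umin bound
      have h1 : ∑ s, μ s * Umin P R G (n+1) s
          ≤ ∑ s, μ s * ∑ s', P s α s' * (R s α s' + Umin P R G n s') := by
        refine Finset.sum_le_sum fun s _ => ?_
        rcases eq_or_lt_of_le (hμ.1 s).1 with h | h
        · rw [← h, zero_mul, zero_mul]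
        · have hbs : 0 < b s := lt_of_lt_of_le h (hμ.1 s).2
          refine mul_le_mul_of_nonneg_left ?_ (hμ.1 s).1
          rw [Umin_succ, if_neg (hnotG s (hobs s hbs))]
          exact minOver_le (hαs s (hobs s hbs))
      have step := step_eq (O := O) hM.1 R G n hb.1 (fun s => hμ.1 s) α
      -- step 2: extend the bt-sum from filter(bt) to filter(b)
      have hPbodec : ∀ z', Pbo O P b α z'
          = (1 - ∑ s, μ s) * Pbo O P bt α z' + Pbo O P μ α z' := fun z' =>
        hsum_decomp (fun s => Pso O P s α z')
      have hfsub : univ.filter (fun z' => 0 < Pbo O P bt α z')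
          ⊆ univ.filter (fun z' => 0 < Pbo O P b α z') := by
        intro z' hz'
        rw [Finset.mem_filter] at hz' ⊢
        refine ⟨Finset.mem_univ _, ?_⟩
        have := Pbo_nonneg hM.1 (fun s => (hμ.1 s).1) α z' (O := O) (b := μ)
        rw [hPbodec z']
        nlinarith [hz'.2, hΔpos]
      have h2 : (1 - ∑ s, μ s) * (∑ z' ∈ univ.filter (fun z' => 0 < Pbo O P bt α z'),
            Pbo O P bt α z' * (Rbel O P R bt α z' + Vopt O P R G n (succB O P bt α z') z'))
          = ∑ z' ∈ univ.filter (fun z' => 0 < Pbo O P b α z'),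
            (1 - ∑ s, μ s) * (Pbo O P bt α z'
              * (Rbel O P R bt α z' + Vopt O P R G n (succB O P bt α z') z')) := by
        rw [Finset.mul_sum]
        refine Finset.sum_subset hfsub fun z' hz1 hz2 => ?_
        have hle : ¬ 0 < Pbo O P bt α z' := fun h =>
          hz2 (Finset.mem_filter.mpr ⟨Finset.mem_univ _, h⟩)
        have : Pbo O P bt α z' = 0 :=
          le_antisymm (not_lt.mp hle) (Pbo_nonneg hM.1 hbtnn α z')
        rw [this, zero_mul, mul_zero]
      -- step 3: pointwise inequality over z' in filter(b)
      have h3 : ∀ z' ∈ univ.filter (fun z' => 0 < Pbo O P b α z'),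
          (1 - ∑ s, μ s) * (Pbo O P bt α z'
              * (Rbel O P R bt α z' + Vopt O P R G n (succB O P bt α z') z'))
            + ((∑ s, μ s * ∑ s', (if O s' = z' then R s α s' * P s α s' else 0))
              + ∑ s, (if O s = z' then ∑ s', μ s' * P s' α s else 0) * Umin P R G n s)
          ≤ Pbo O P b α z'
              * (Rbel O P R b α z' + Vopt O P R G n (succB O P b α z') z') := by
        intro z' hz'
        rw [Finset.mem_filter] at hz'
        have hc : 0 < Pbo O P b α z' := hz'.2
        obtain ⟨hsb, hso⟩ := succB_isBelief hM.1 hb.1 hc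
        have hRb : Pbo O P b α z' * Rbel O P R b α z'
            = ∑ s, b s * ∑ s', (if O s' = z' then R s α s' * P s α s' else 0) :=
          Rbel_mul P R hc.ne'
        have hrdec := hsum_decomp
          (fun s => ∑ s', (if O s' = z' then R s α s' * P s α s' else 0))
        have hnumnn : ∀ s : S, 0 ≤ ∑ s', μ s' * P s' α s := fun s =>
          Finset.sum_nonneg fun s' _ => mul_nonneg (hμ.1 s').1 (hM.1 s' α s)
        have hnumle : ∀ s : S, (∑ s', μ s' * P s' α s) ≤ ∑ s', b s' * P s' α s := fun s =>
          Finset.sum_le_sum fun s' _ => mul_le_mul_of_nonneg_right (hμ.1 s').2 (hM.1 s' α s)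
        have hnd : ∀ s : S, ∑ s', b s' * P s' α s
            = (1 - ∑ s'', μ s'') * (∑ s', bt s' * P s' α s) + ∑ s', μ s' * P s' α s := by
          intro s
          rw [Finset.mul_sum, ← Finset.sum_add_distrib]
          refine Finset.sum_congr rfl fun s' _ => ?_
          rw [hpt s']; ring
        rcases eq_or_lt_of_le (Pbo_nonneg hM.1 hbtnn α z' (O := O)) with hct | hct
        · -- case Pbo bt = 0
          have hct0 : Pbo O P bt α z' = 0 := hct.symm
          have hbtr0 : ∑ s, bt s * ∑ s', (if O s' = z' then R s α s' * P s α s' else 0) = 0 := by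
            refine Finset.sum_eq_zero fun s _ => ?_
            rcases eq_or_lt_of_le (hbtnn s) with h | h
            · rw [← h, zero_mul]
            · have h0 : (∑ s', (if O s' = z' then R s α s' * P s α s' else 0)) = 0 := by
                refine Finset.sum_eq_zero fun s' _ => ?_
                by_cases ho : O s' = z'
                · rw [if_pos ho, P_eq_zero hM.1 hbtnn hct0 h ho, mul_zero]
                · rw [if_neg ho]
              rw [h0, mul_zero]
          have hV := aux_L O P hM R G ⟨Z', hZ'⟩ n (succB O P b α z') z' hsb hso
          have hU : Pbo O P b α z' * (∑ s, succB O P b α z' s * Umin P R G n s)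
              = ∑ s, (if O s = z' then ∑ s', b s' * P s' α s else 0) * Umin P R G n s := by
            rw [Finset.mul_sum]
            refine Finset.sum_congr rfl fun s _ => ?_
            rw [succB]
            by_cases h : O s = z'
            · rw [if_pos h, if_pos h, ← mul_assoc, mul_comm (Pbo O P b α z'),
                div_mul_cancel₀ _ hc.ne']
            · simp [h]
          have hnumdec : ∀ s, O s = z' →
              (∑ s', b s' * P s' α s) = ∑ s', μ s' * P s' α s := by
            intro s ho
            have h0 : ∑ s', bt s' * P s' α s = 0 := by
              refine Finset.sum_eq_zero fun s'' _ => ?_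
              rcases eq_or_lt_of_le (hbtnn s'') with h | h
              · rw [← h, zero_mul]
              · rw [P_eq_zero hM.1 hbtnn hct0 h ho, mul_zero]
            rw [hnd s, h0, mul_zero, zero_add]
          have hBeq : ∑ s, (if O s = z' then ∑ s', b s' * P s' α s else 0) * Umin P R G n s
              = ∑ s, (if O s = z' then ∑ s', μ s' * P s' α s else 0) * Umin P R G n s := by
            refine Finset.sum_congr rfl fun s _ => ?_
            by_cases h : O s = z'
            · rw [if_pos h, if_pos h, hnumdec s h]
            · rw [if_neg h, if_neg h]
          have hVmul : Pbo O P b α z' * (∑ s, succB O P b α z' s * Umin P R G n s)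
              ≤ Pbo O P b α z' * Vopt O P R G n (succB O P b α z') z' :=
            mul_le_mul_of_nonneg_left hV hc.le
          have e1 : Pbo O P b α z' * Rbel O P R b α z'
              = ∑ s, μ s * ∑ s', (if O s' = z' then R s α s' * P s α s' else 0) := by
            rw [hRb, hrdec, hbtr0, mul_zero, zero_add]
          have hb2 : ∑ s, (if O s = z' then ∑ s', μ s' * P s' α s else 0) * Umin P R G n s
              ≤ Pbo O P b α z' * Vopt O P R G n (succB O P b α z') z' := by
            rw [← hBeq, ← hU]; exact hVmul
          rw [hct0]
          have e4 : Pbo O P b α z'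
                * (Rbel O P R b α z' + Vopt O P R G n (succB O P b α z') z')
              = Pbo O P b α z' * Rbel O P R b α z'
                + Pbo O P b α z' * Vopt O P R G n (succB O P b α z') z' := by ring
          rw [e4, zero_mul, mul_zero, zero_add]
          linarith [e1, hb2]
        · -- case 0 < Pbo bt
          have hcd : Pbo O P b α z'
              = (1 - ∑ s, μ s) * Pbo O P bt α z' + Pbo O P μ α z' := hPbodec z'
          have hcmnn : 0 ≤ Pbo O P μ α z' :=
            Pbo_nonneg hM.1 (fun s => (hμ.1 s).1) α z'
          have hcmlt : Pbo O P μ α z' < Pbo O P b α z' := by nlinarith [hct, hΔpos]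
          set μ' : S → ℝ :=
            fun s => if O s = z' then (∑ s', μ s' * P s' α s) / Pbo O P b α z' else 0
            with hμ'
          have hμ'sum : ∑ s, μ' s = Pbo O P μ α z' / Pbo O P b α z' := by
            rw [← key_sum P μ α z', Finset.sum_div]
            refine Finset.sum_congr rfl fun s _ => ?_
            by_cases h : O s = z' <;> simp [hμ', h]
          have h1mμ : 1 - ∑ s, μ' s
              = (1 - ∑ s, μ s) * Pbo O P bt α z' / Pbo O P b α z' := by
            rw [hμ'sum, eq_div_iff hc.ne', sub_mul, one_mul,
              div_mul_cancel₀ _ hc.ne']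
            linarith [hcd]
          have hclip : IsBeliefClip (succB O P b α z') μ' := by
            refine ⟨fun s => ⟨?_, ?_⟩, ?_⟩
            · by_cases h : O s = z' <;>
                simp [hμ', h, div_nonneg (hnumnn s) hc.le]
            · rw [succB]
              by_cases h : O s = z'
              · simp only [hμ', if_pos h]
                exact (div_le_div_iff_of_pos_right hc).mpr (hnumle s)
              · simp [hμ', h]
            · rw [hμ'sum, div_lt_one hc]; exact hcmlt
          have hcc : clipped (succB O P b α z') μ' = succB O P bt α z' := by
            funext s
            simp only [clipped, succB]
            rw [hμ'sum]
            by_cases h : O s = z'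
            · rw [if_pos h, if_pos h]
              simp only [hμ', if_pos h]
              have hden : (1:ℝ) - Pbo O P μ α z' / Pbo O P b α z'
                  = (1 - ∑ s, μ s) * Pbo O P bt α z' / Pbo O P b α z' := by
                rw [eq_div_iff hc.ne', sub_mul, one_mul, div_mul_cancel₀ _ hc.ne']
                linarith [hcd]
              rw [hden, div_sub_div_same,
                div_eq_div_iff (by positivity : (0:ℝ) < (1 - ∑ s, μ s) * Pbo O P bt α z' / Pbo O P b α z').ne' hct.ne']
              have h5 : (∑ s', b s' * P s' α s) - (∑ s', μ s' * P s' α s)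
                  = (1 - ∑ s'', μ s'') * (∑ s', bt s' * P s' α s) := by linarith [hnd s]
              rw [h5]; ring
            · rw [if_neg h, if_neg h]
              simp [hμ', h]
          have hIH := ih (succB O P b α z') μ' z' hsb hso hclip
          rw [hcc, h1mμ] at hIH
          have hIH2 := mul_le_mul_of_nonneg_left hIH hc.le
          have hA : Pbo O P b α z' * ((1 - ∑ s, μ s) * Pbo O P bt α z' / Pbo O P b α z'
                  * Vopt O P R G n (succB O P bt α z') z' + ∑ s, μ' s * Umin P R G n s)
              = (1 - ∑ s, μ s)
                  * (Pbo O P bt α z' * Vopt O P R G n (succB O P bt α z') z')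
                + ∑ s, (if O s = z' then ∑ s', μ s' * P s' α s else 0) * Umin P R G n s := by
            rw [mul_add]
            congr 1
            · field_simp
            · rw [Finset.mul_sum]
              refine Finset.sum_congr rfl fun s _ => ?_
              simp only [hμ']
              by_cases h : O s = z'
              · rw [if_pos h, if_pos h, ← mul_assoc, mul_comm (Pbo O P b α z'),
                  div_mul_cancel₀ _ hc.ne']
              · simp [h]
          rw [hA] at hIH2
          have e1 : Pbo O P b α z' * Rbel O P R b α z'
              = (1 - ∑ s, μ s) * (Pbo O P bt α z' * Rbel O P R bt α z')
                + ∑ s, μ s * ∑ s', (if O s' = z' then R s α s' * P s α s' else 0) := by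
            rw [hRb, hrdec, ← Rbel_mul P R hct.ne']
          have ering : (1 - ∑ s, μ s) * (Pbo O P bt α z'
                * (Rbel O P R bt α z' + Vopt O P R G n (succB O P bt α z') z'))
              = (1 - ∑ s, μ s) * (Pbo O P bt α z' * Rbel O P R bt α z')
                + (1 - ∑ s, μ s)
                  * (Pbo O P bt α z' * Vopt O P R G n (succB O P bt α z') z') := by ring
          have ering2 : Pbo O P b α z'
                * (Rbel O P R b α z' + Vopt O P R G n (succB O P b α z') z')
              = Pbo O P b α z' * Rbel O P R b α z'
                + Pbo O P b α z' * Vopt O P R G n (succB O P b α z') z' := by ring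
          rw [ering, ering2]
          linarith [hIH2, e1]
      -- combine
      calc (1 - ∑ s, μ s) * (∑ z' ∈ univ.filter (fun z' => 0 < Pbo O P bt α z'),
            Pbo O P bt α z' * (Rbel O P R bt α z' + Vopt O P R G n (succB O P bt α z') z'))
            + ∑ s, μ s * Umin P R G (n+1) s
          ≤ (1 - ∑ s, μ s) * (∑ z' ∈ univ.filter (fun z' => 0 < Pbo O P bt α z'),
            Pbo O P bt α z' * (Rbel O P R bt α z' + Vopt O P R G n (succB O P bt α z') z'))
            + ∑ s, μ s * ∑ s', P s α s' * (R s α s' + Umin P R G n s') := by linarith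
        _ = ∑ z' ∈ univ.filter (fun z' => 0 < Pbo O P b α z'),
              ((1 - ∑ s, μ s) * (Pbo O P bt α z'
                * (Rbel O P R bt α z' + Vopt O P R G n (succB O P bt α z') z'))
              + ((∑ s, μ s * ∑ s', (if O s' = z' then R s α s' * P s α s' else 0))
                + ∑ s, (if O s = z' then ∑ s', μ s' * P s' α s else 0) * Umin P R G n s)) := by
            rw [Finset.sum_add_distrib, ← h2, step]
        _ ≤ ∑ z' ∈ univ.filter (fun z' => 0 < Pbo O P b α z'),
              Pbo O P b α z'
                * (Rbel O P R b α z' + Vopt O P R G n (succB O P b α z') z') :=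
            Finset.sum_le_sum h3

end main

/-- `n`-step belief clipping lemma:
`(1 − Δ)·V_n(b ⊖ μ) + ∑_s μ(s)·U_n(s) ≤ V_n(b)` where `Δ = Σμ`. -/
theorem stmt_17 {S Act Z : Type} [Fintype S] [Nonempty S] [Fintype Act] [Nonempty Act]
    [Fintype Z] [Nonempty Z]
    (O : S → Z) (P : S → Act → S → ℝ) (hM : IsPOMDP O P)
    (R : S → Act → S → ℝ) (G : Set S) (hG : ObservableGoal O G)
    (b μ : S → ℝ) (z : Z) (hb : IsBelief b) (hobs : HasObs O b z)
    (hμ : IsBeliefClip b μ) (n : ℕ) :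
    (1 - ∑ s, μ s) * Vopt O P R G n (clipped b μ) z + ∑ s, μ s * Umin P R G n s ≤
      Vopt O P R G n b z := by
  exact main_aux O P hM R G hG n b μ z hb hobs hμ
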